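/- Let k be a field and φ an exponential map on an affine k-domain R admitting a slice: an element s ∈ R with φ(s) = s − W (or s + W). Then R = R^φ[s] and s is transcendental over R^φ, so R ≅ (R^φ)^{[1]} as R^φ-algebras. -/

import Mathlib

open Polynomial

/-- An exponential map on a commutative ring `R`. -/
def IsExpMap {R : Type*} [CommRing R] (φ : R →+* Polynomial R) : Prop :=
  (∀ a : R, (φ a).eval 0 = a) ∧
  (∀ a : R, (φ a).map φ =
    (φ a).eval₂ ((Polynomial.C : Polynomial R →+* Polynomial (Polynomial R)).comp Polynomial.C)
      (Polynomial.X + Polynomial.C Polynomial.X))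

/-!
For a `+`-slice `σ` (`φ σ = σ + W`) the Dixmier map `π b = φ(b)(-σ)` lands in the invariant ring
`R^φ`, and coassociativity evaluated at `-σ` gives `(φ a).map π = (φ a)(W - σ)`. So applying `π`
to the coefficients of `φ a` yields a polynomial over `R^φ` whose value at `σ` is `φ(a)(0) = a`.
If a polynomial `p` over `R^φ` vanishes at `σ`, applying `φ` gives `p(σ + W) = 0`, so `p = 0`.
A `-`-slice `s` is handled through the `+`-slice `-s`.
-/

lemma Polynomial.coeff_comp_neg_X {R : Type*} [Ring R] (p : R[X]) (n : ℕ) :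
    (p.comp (-X)).coeff n = p.coeff n * (-1) ^ n := by
  rw [← comp_C_mul_X_coeff, C_neg, C_1, neg_one_mul]

section

variable {R : Type*} [CommRing R]

def IsFreeGenerator (S : Subring R) (s : R) : Prop :=
  (∀ a : R, ∃ p : R[X], (∀ i, p.coeff i ∈ S) ∧ p.eval s = a) ∧
    ∀ p : R[X], (∀ i, p.coeff i ∈ S) → p.eval s = 0 → p = 0

lemma IsFreeGenerator.neg {S : Subring R} {s : R} (hs : IsFreeGenerator S s) :
    IsFreeGenerator S (-s) := by
  obtain ⟨hgen, hfree⟩ := hs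
  have hcoeff : ∀ p : R[X], (∀ i, p.coeff i ∈ S) → ∀ i, (p.comp (-X)).coeff i ∈ S :=
    fun p hp i ↦ coeff_comp_neg_X p i ▸ S.mul_mem (hp i) (S.pow_mem (S.neg_mem S.one_mem) i)
  refine ⟨fun a ↦ ?_, fun p hp hps ↦ ?_⟩
  · obtain ⟨p, hp, rfl⟩ := hgen a
    exact ⟨p.comp (-X), hcoeff p hp, by simp⟩
  · exact comp_neg_X_eq_zero_iff.mp (hfree _ (hcoeff p hp) (by simpa using hps))

noncomputable def invariantRing (φ : R →+* R[X]) : Subring R := φ.eqLocus C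

lemma mem_invariantRing {φ : R →+* R[X]} {a : R} : a ∈ invariantRing φ ↔ φ a = C a := Iff.rfl

lemma map_eval_of_coeff_mem_invariantRing {φ : R →+* R[X]} {p : R[X]}
    (hp : ∀ i, p.coeff i ∈ invariantRing φ) (s : R) : φ (p.eval s) = p.comp (φ s) := by
  have hmap : p.map φ = p.map C := ext fun i ↦ by simpa using mem_invariantRing.mp (hp i)
  rw [eval, hom_eval₂, RingHom.comp_id, eval₂_eq_eval_map, hmap, eval_map, comp]

namespace IsExpMap

variable {φ : R →+* R[X]}

lemma map_eval (hφ : IsExpMap φ) (b t : R) : φ ((φ b).eval t) = (φ b).comp (φ t + X) := by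
  rw [eval, hom_eval₂, RingHom.comp_id, eval₂_eq_eval_map, hφ.2, ← coe_evalRingHom, hom_eval₂]
  exact eval₂_congr (RingHom.ext fun r ↦ by simp) (by simp) rfl

lemma map_evalRingHom_comp (hφ : IsExpMap φ) (a t : R) :
    (φ a).map ((evalRingHom t).comp φ) = taylor t (φ a) := by
  rw [← map_map, hφ.2, ← coe_mapRingHom, hom_eval₂]
  exact eval₂_congr (RingHom.ext fun r ↦ by simp) (by simp) rfl

lemma eval_neg_mem_invariantRing (hφ : IsExpMap φ) {σ : R} (hσ : φ σ = C σ + X) (b : R) :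
    (φ b).eval (-σ) ∈ invariantRing φ := by
  rw [mem_invariantRing, hφ.map_eval, map_neg, hσ, neg_add, neg_add_cancel_right, ← C_neg,
    comp_C]

lemma isFreeGenerator_of_map_eq_C_add_X (hφ : IsExpMap φ) {σ : R} (hσ : φ σ = C σ + X) :
    IsFreeGenerator (invariantRing φ) σ := by
  refine ⟨fun a ↦ ⟨(φ a).map ((evalRingHom (-σ)).comp φ), fun i ↦ ?_, ?_⟩, fun p hp hpσ ↦ ?_⟩
  · simpa using hφ.eval_neg_mem_invariantRing hσ ((φ a).coeff i)
  · rw [hφ.map_evalRingHom_comp, taylor_eval, add_neg_cancel, hφ.1]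
  · have htaylor : taylor σ p = 0 := by
      rw [taylor_apply, add_comm, ← hσ, ← map_eval_of_coeff_mem_invariantRing hp, hpσ, map_zero]
    exact (taylor_eq_zero σ p).mp htaylor

end IsExpMap

end

theorem stmt14_general {k R : Type*} [Field k] [CommRing R] [Algebra k R]
    (φ : R →ₐ[k] Polynomial R) (hφ : IsExpMap φ.toRingHom)
    (s : R) (hs : φ s = Polynomial.C s - Polynomial.X ∨ φ s = Polynomial.C s + Polynomial.X) :
    (∀ a : R, ∃ p : Polynomial R,
        (∀ i : ℕ, φ (p.coeff i) = Polynomial.C (p.coeff i)) ∧ p.eval s = a) ∧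
    (∀ p : Polynomial R,
        (∀ i : ℕ, φ (p.coeff i) = Polynomial.C (p.coeff i)) → p.eval s = 0 → p = 0) := by
  rcases hs with hs | hs
  · have hneg : φ.toRingHom (-s) = C (-s) + X := by
      simp [hs, sub_eq_neg_add]
    have := (hφ.isFreeGenerator_of_map_eq_C_add_X hneg).neg
    rwa [neg_neg] at this
  · exact hφ.isFreeGenerator_of_map_eq_C_add_X hs

/-- Slice theorem: if an exponential map `φ` on an affine `k`-domain `R` has a
slice `s` (i.e. `φ(s) = s ∓ W`), then `R = R^φ[s]` with `s` transcendental over the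
invariant ring `R^φ`, so `R ≅ (R^φ)^{[1]}`. -/
theorem stmt14 {k R : Type*} [Field k] [CommRing R] [IsDomain R] [Algebra k R]
    [Algebra.FiniteType k R]
    (φ : R →ₐ[k] Polynomial R) (hφ : IsExpMap φ.toRingHom)
    (s : R) (hs : φ s = Polynomial.C s - Polynomial.X ∨ φ s = Polynomial.C s + Polynomial.X) :
    (∀ a : R, ∃ p : Polynomial R,
        (∀ i : ℕ, φ (p.coeff i) = Polynomial.C (p.coeff i)) ∧ p.eval s = a) ∧
    (∀ p : Polynomial R,
        (∀ i : ℕ, φ (p.coeff i) = Polynomial.C (p.coeff i)) → p.eval s = 0 → p = 0) :=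
  stmt14_general φ hφ s hs
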